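/- If p is an equilibrium density of the mixed model (p = μT_D[p] + (1−μ)T[p]) with mean w, then its first four moments are M_1 = w, M_2 = 3w²/(2−μ), M_3 = 3(4+μ)w³/(2−μ)², and M_4 = 5(μ²+8μ+12)w⁴/(2−μ)³. -/

import Mathlib

/-!
All moments are first taken in `ℝ≥0∞`, `∫⁻ x in (0, ∞), xᵏ f x`, where Tonelli's theorem needs no
integrability. Both `TD` and `T` are built from convolutions on `(0, ∞)`; the `k`-th moment of a
convolution `φ * ψ` is the binomial sum `∑ C(k, j) M_j(φ) M_{k-j}(ψ)`, and exchanging the order of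
integration in `S` gives `M_k(S[p]) = M_k(p) / (k + 1)`. Taking `k`-th moments of the equilibrium
equation therefore expresses `M_k(p)` polynomially through `M_0(p), …, M_k(p)`. For `k ≤ 4` every
term is finite, so these are real identities, and solving them for `k = 2, 3, 4` with `M_0 = 1`,
`M_1 = w` gives the formulas.
-/

open MeasureTheory Real Set

/-- S[p](x) = ∫_x^∞ p(u)/u du. -/
noncomputable def S (p : ℝ → ℝ) (x : ℝ) : ℝ := ∫ u in Set.Ioi x, p u / u

/-- T[p] = S[p] * S[p] (convolution on [0,∞)). -/
noncomputable def T (p : ℝ → ℝ) (x : ℝ) : ℝ := ∫ v in (0:ℝ)..x, S p (x - v) * S p v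

/-- The Directed Random Market operator. -/
noncomputable def TD (p : ℝ → ℝ) (x : ℝ) : ℝ :=
  (1 / 2) * (∫ u in (0:ℝ)..x, p (x - u) * S p u) + (1 / 2) * S p x

/-- Laplace transform of a density on [0,∞). -/
noncomputable def L (p : ℝ → ℝ) (s : ℝ) : ℝ := ∫ x in Set.Ioi (0:ℝ), Real.exp (-s * x) * p x

open scoped ENNReal

lemma ofReal_add_pow_mul_mul {u v : ℝ} {a b : ℝ≥0∞} (ha : u ≤ 0 → a = 0) (hb : v ≤ 0 → b = 0)
    (k : ℕ) :
    ENNReal.ofReal ((u + v) ^ k) * (a * b) =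
      ∑ j ∈ Finset.range (k + 1), (k.choose j : ℝ≥0∞) *
        (ENNReal.ofReal (u ^ j) * a) * (ENNReal.ofReal (v ^ (k - j)) * b) := by
  rcases le_or_gt u 0 with hu | hu
  · simp [ha hu]
  rcases le_or_gt v 0 with hv | hv
  · simp [hb hv]
  rw [add_pow, ENNReal.ofReal_sum_of_nonneg (fun j _ => by positivity), Finset.sum_mul]
  refine Finset.sum_congr rfl fun j _ => ?_
  rw [ENNReal.ofReal_mul (by positivity), ENNReal.ofReal_mul (by positivity),
    ENNReal.ofReal_natCast]
  ring

lemma lintegral_pow_mul_conv_of_nonpos_eq_zero {φ ψ : ℝ → ℝ≥0∞} (hφ : Measurable φ)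
    (hψ : Measurable ψ) (hφ0 : ∀ u ≤ 0, φ u = 0) (hψ0 : ∀ v ≤ 0, ψ v = 0) (k : ℕ) :
    ∫⁻ x, ENNReal.ofReal (x ^ k) * ∫⁻ v, φ (x - v) * ψ v =
      ∑ j ∈ Finset.range (k + 1), (k.choose j : ℝ≥0∞) *
        (∫⁻ u, ENNReal.ofReal (u ^ j) * φ u) * ∫⁻ v, ENNReal.ofReal (v ^ (k - j)) * ψ v := by
  calc ∫⁻ x, ENNReal.ofReal (x ^ k) * ∫⁻ v, φ (x - v) * ψ v
      = ∫⁻ x, ∫⁻ v, ENNReal.ofReal (x ^ k) * (φ (x - v) * ψ v) := by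
        simp_rw [lintegral_const_mul' _ _ ENNReal.ofReal_ne_top]
    _ = ∫⁻ v, ∫⁻ x, ENNReal.ofReal (x ^ k) * (φ (x - v) * ψ v) :=
        lintegral_lintegral_swap (by fun_prop)
    _ = ∫⁻ v, ∫⁻ u, ENNReal.ofReal ((u + v) ^ k) * (φ u * ψ v) := by
        congr 1 with v
        simpa only [sub_add_cancel] using
          lintegral_sub_right_eq_self (fun u => ENNReal.ofReal ((u + v) ^ k) * (φ u * ψ v)) v
    _ = ∫⁻ v, ∑ j ∈ Finset.range (k + 1), (k.choose j : ℝ≥0∞) *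
          (∫⁻ u, ENNReal.ofReal (u ^ j) * φ u) * (ENNReal.ofReal (v ^ (k - j)) * ψ v) := by
        congr 1 with v
        simp_rw [ofReal_add_pow_mul_mul (hφ0 _) (hψ0 v)]
        rw [lintegral_finsetSum _ fun j _ => by fun_prop]
        congr 1 with j
        rw [lintegral_mul_const _ (by fun_prop), lintegral_const_mul _ (by fun_prop)]
    _ = _ := by
        rw [lintegral_finsetSum _ fun j _ => by fun_prop]
        congr 1 with j
        rw [lintegral_const_mul _ (by fun_prop)]

lemma lintegral_Ioc_conv_eq (φ ψ : ℝ → ℝ≥0∞) (x : ℝ) :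
    ∫⁻ v in Ioc 0 x, φ (x - v) * ψ v =
      ∫⁻ v, (Ioi 0).indicator φ (x - v) * (Ioi 0).indicator ψ v := by
  have h : ∀ v, (Ioi 0).indicator φ (x - v) * (Ioi 0).indicator ψ v =
      (Ioo 0 x).indicator (fun v => φ (x - v) * ψ v) v := by
    intro v
    by_cases h0 : 0 < v <;> by_cases hx : v < x <;> simp [indicator, h0, hx]
  simp_rw [h]
  rw [lintegral_indicator measurableSet_Ioo, setLIntegral_congr Ioo_ae_eq_Ioc]

lemma measurable_lintegral_Ioc_conv {φ ψ : ℝ → ℝ≥0∞} (hφ : Measurable φ) (hψ : Measurable ψ) :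
    Measurable fun x => ∫⁻ v in Ioc 0 x, φ (x - v) * ψ v := by
  simp_rw [lintegral_Ioc_conv_eq]
  exact Measurable.lintegral_prod_right'
    (((hφ.indicator measurableSet_Ioi).comp (measurable_fst.sub measurable_snd)).mul
      ((hψ.indicator measurableSet_Ioi).comp measurable_snd))

lemma lintegral_indicator_Ioi_pow_mul (f : ℝ → ℝ≥0∞) (k : ℕ) :
    ∫⁻ u, ENNReal.ofReal (u ^ k) * (Ioi 0).indicator f u =
      ∫⁻ u in Ioi 0, ENNReal.ofReal (u ^ k) * f u := by
  rw [← lintegral_indicator measurableSet_Ioi]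
  simp_rw [indicator_mul_right]

theorem lintegral_Ioi_pow_mul_conv {φ ψ : ℝ → ℝ≥0∞} (hφ : Measurable φ) (hψ : Measurable ψ)
    (k : ℕ) :
    ∫⁻ x in Ioi 0, ENNReal.ofReal (x ^ k) * ∫⁻ v in Ioc 0 x, φ (x - v) * ψ v =
      ∑ j ∈ Finset.range (k + 1), (k.choose j : ℝ≥0∞) *
        (∫⁻ u in Ioi 0, ENNReal.ofReal (u ^ j) * φ u) *
          ∫⁻ v in Ioi 0, ENNReal.ofReal (v ^ (k - j)) * ψ v := by
  have hsupp : (Function.support fun x => ENNReal.ofReal (x ^ k) *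
      ∫⁻ v in Ioc 0 x, φ (x - v) * ψ v) ⊆ Ioi 0 := by
    intro x hx
    rw [mem_Ioi]
    by_contra hx0
    simp [Ioc_eq_empty hx0] at hx
  have hvanish : ∀ (f : ℝ → ℝ≥0∞) (u : ℝ), u ≤ 0 → (Ioi 0).indicator f u = 0 :=
    fun f u hu => indicator_of_notMem (not_lt.2 hu) f
  rw [setLIntegral_eq_of_support_subset hsupp]
  simp_rw [lintegral_Ioc_conv_eq, ← lintegral_indicator_Ioi_pow_mul]
  exact lintegral_pow_mul_conv_of_nonpos_eq_zero (hφ.indicator measurableSet_Ioi)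
    (hψ.indicator measurableSet_Ioi) (hvanish φ) (hvanish ψ) k

lemma lintegral_Ioo_pow {u : ℝ} (hu : 0 ≤ u) (k : ℕ) :
    ∫⁻ x in Ioo 0 u, ENNReal.ofReal (x ^ k) = ENNReal.ofReal (u ^ (k + 1) / (k + 1)) := by
  rw [setLIntegral_congr Ioo_ae_eq_Ioc, ← ofReal_integral_eq_lintegral_ofReal,
    ← intervalIntegral.integral_of_le hu, integral_pow]
  · simp
  · exact (continuous_pow k).integrableOn_Ioc
  · filter_upwards [ae_restrict_mem measurableSet_Ioc] with x hx using pow_nonneg hx.1.le k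

theorem lintegral_Ioi_pow_mul_lintegral_Ioi {f : ℝ → ℝ≥0∞} (hf : Measurable f) (k : ℕ) :
    ∫⁻ x in Ioi 0, ENNReal.ofReal (x ^ k) * ∫⁻ u in Ioi x, f u =
      ∫⁻ u in Ioi 0, ENNReal.ofReal (u ^ (k + 1) / (k + 1)) * f u := by
  have hswap : ∀ x u : ℝ, (Ioi x).indicator (fun u => ENNReal.ofReal (x ^ k) * f u) u =
      (Iio u).indicator (fun x => ENNReal.ofReal (x ^ k)) x * f u := by
    intro x u
    by_cases h : x < u <;> simp [indicator, h]
  have hsupp : (Function.support fun u =>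
      (∫⁻ x in Ioi 0, (Iio u).indicator (fun x => ENNReal.ofReal (x ^ k)) x) * f u) ⊆ Ioi 0 := by
    intro u hu
    rw [mem_Ioi]
    by_contra hu0
    simp [lintegral_indicator measurableSet_Iio, Measure.restrict_restrict measurableSet_Iio,
      Iio_inter_Ioi, Ioo_eq_empty hu0] at hu
  calc ∫⁻ x in Ioi 0, ENNReal.ofReal (x ^ k) * ∫⁻ u in Ioi x, f u
      = ∫⁻ x in Ioi 0, ∫⁻ u, (Ioi x).indicator (fun u => ENNReal.ofReal (x ^ k) * f u) u := by
        simp_rw [lintegral_indicator measurableSet_Ioi,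
          lintegral_const_mul' _ _ ENNReal.ofReal_ne_top]
    _ = ∫⁻ u, ∫⁻ x in Ioi 0, (Ioi x).indicator (fun u => ENNReal.ofReal (x ^ k) * f u) u :=
        lintegral_lintegral_swap (Measurable.aemeasurable <|
          Measurable.ite (measurableSet_lt measurable_fst measurable_snd) (by fun_prop)
            measurable_const)
    _ = ∫⁻ u in Ioi 0,
          (∫⁻ x in Ioi 0, (Iio u).indicator (fun x => ENNReal.ofReal (x ^ k)) x) * f u := by
        simp_rw [hswap, lintegral_mul_const _ ((by fun_prop : Measurable fun x : ℝ =>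
          ENNReal.ofReal (x ^ k)).indicator measurableSet_Iio)]
        exact (setLIntegral_eq_of_support_subset hsupp).symm
    _ = _ := by
        refine setLIntegral_congr_fun measurableSet_Ioi fun u (hu : 0 < u) => ?_
        rw [lintegral_indicator measurableSet_Iio, Measure.restrict_restrict measurableSet_Iio,
          Iio_inter_Ioi, lintegral_Ioo_pow hu.le]

lemma integrableOn_pow_mul_of_le {f : ℝ → ℝ} {k n : ℕ} (hf : IntegrableOn f (Ioi 0))
    (hfn : IntegrableOn (fun x => x ^ n * f x) (Ioi 0)) (hk : k ≤ n) :
    IntegrableOn (fun x => x ^ k * f x) (Ioi 0) := by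
  refine Integrable.mono (hf.add hfn)
    ((continuous_pow k).aestronglyMeasurable.mul hf.aestronglyMeasurable) ?_
  filter_upwards [ae_restrict_mem measurableSet_Ioi] with x (hx : 0 < x)
  have hpow : x ^ k ≤ 1 + x ^ n := by
    rcases le_total x 1 with h | h
    · linarith [pow_le_one₀ (n := k) hx.le h, pow_nonneg hx.le n]
    · linarith [pow_le_pow_right₀ h hk]
  calc ‖x ^ k * f x‖ = x ^ k * ‖f x‖ := by rw [norm_mul, norm_pow, Real.norm_of_nonneg hx.le]
    _ ≤ (1 + x ^ n) * ‖f x‖ := by gcongr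
    _ = ‖(f + fun x => x ^ n * f x) x‖ := by
        rw [Pi.add_apply, ← one_add_mul, norm_mul,
          Real.norm_of_nonneg (by linarith [pow_nonneg hx.le n] : (0 : ℝ) ≤ 1 + x ^ n)]

noncomputable def moment (f : ℝ → ℝ) (k : ℕ) : ℝ := ∫ x in Ioi 0, x ^ k * f x

noncomputable def lmoment (f : ℝ → ℝ) (k : ℕ) : ℝ≥0∞ :=
  ∫⁻ x in Ioi 0, ENNReal.ofReal (x ^ k) * ENNReal.ofReal (f x)

section moments
variable {f : ℝ → ℝ}

lemma lmoment_eq_ofReal_moment (hf : ∀ x, 0 ≤ f x) {k : ℕ}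
    (hfk : IntegrableOn (fun x => x ^ k * f x) (Ioi 0)) :
    lmoment f k = ENNReal.ofReal (moment f k) := by
  rw [moment, ofReal_integral_eq_lintegral_ofReal hfk
    (ae_restrict_of_forall_mem measurableSet_Ioi fun x (hx : 0 < x) =>
      mul_nonneg (pow_nonneg hx.le k) (hf x))]
  exact setLIntegral_congr_fun measurableSet_Ioi fun x (hx : 0 < x) =>
    (ENNReal.ofReal_mul (pow_nonneg hx.le k)).symm

/-- Also when `lmoment f k = ∞`: then both sides are `0` by the junk-value conventions. -/
lemma toReal_lmoment (hfm : Measurable f) (hf : ∀ x, 0 ≤ f x) (k : ℕ) :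
    (lmoment f k).toReal = moment f k := by
  rw [moment, integral_eq_lintegral_of_nonneg_ae
    (ae_restrict_of_forall_mem measurableSet_Ioi fun x (hx : 0 < x) =>
      mul_nonneg (pow_nonneg hx.le k) (hf x)) (by fun_prop)]
  congr 1
  exact setLIntegral_congr_fun measurableSet_Ioi fun x (hx : 0 < x) =>
    (ENNReal.ofReal_mul (pow_nonneg hx.le k)).symm

end moments

lemma toReal_sum_choose_mul {a b : ℕ → ℝ≥0∞} {k : ℕ} (ha : ∀ j ≤ k, a j ≠ ⊤)
    (hb : ∀ j ≤ k, b j ≠ ⊤) :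
    (∑ j ∈ Finset.range (k + 1), (k.choose j : ℝ≥0∞) * a j * b (k - j)).toReal =
      ∑ j ∈ Finset.range (k + 1), (k.choose j : ℝ) * (a j).toReal * (b (k - j)).toReal := by
  rw [ENNReal.toReal_sum fun j hj => ENNReal.mul_ne_top
    (ENNReal.mul_ne_top (ENNReal.natCast_ne_top _) (ha j (Finset.mem_range_succ_iff.1 hj)))
    (hb _ (Nat.sub_le _ _))]
  simp [ENNReal.toReal_mul]

lemma ofReal_intervalIntegral_conv {f g : ℝ → ℝ} {x C : ℝ} (hx : 0 ≤ x)
    (hf : IntervalIntegrable f volume 0 x) (hg : Measurable g) (hgC : ∀ v ∈ Ioc 0 x, ‖g v‖ ≤ C)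
    (hf0 : ∀ v ∈ Ioc 0 x, 0 ≤ f (x - v)) (hg0 : ∀ v ∈ Ioc 0 x, 0 ≤ g v) :
    ENNReal.ofReal (∫ v in 0..x, f (x - v) * g v) =
      ∫⁻ v in Ioc 0 x, ENNReal.ofReal (f (x - v)) * ENNReal.ofReal (g v) := by
  have hfx : IntegrableOn (fun v => f (x - v)) (Ioc 0 x) := by
    have := (hf.comp_sub_left x).symm
    rw [sub_self, sub_zero] at this
    exact (intervalIntegrable_iff_integrableOn_Ioc_of_le hx).1 this
  rw [intervalIntegral.integral_of_le hx, ofReal_integral_eq_lintegral_ofReal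
    (hfx.mul_bdd hg.aestronglyMeasurable (ae_restrict_of_forall_mem measurableSet_Ioc hgC))
    (ae_restrict_of_forall_mem measurableSet_Ioc fun v hv => mul_nonneg (hf0 v hv) (hg0 v hv))]
  exact setLIntegral_congr_fun measurableSet_Ioc fun v hv => ENNReal.ofReal_mul (hf0 v hv)

section S
variable {p : ℝ → ℝ}

lemma measurable_S (hp : Measurable p) : Measurable (S p) := by
  have h : S p = fun x => ∫ u, (Ioi x).indicator (fun u => p u / u) u := by
    ext x
    rw [S, integral_indicator measurableSet_Ioi]
  rw [h]
  refine (StronglyMeasurable.integral_prod_right'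
    (f := fun z : ℝ × ℝ => (Ioi z.1).indicator (fun u => p u / u) z.2) ?_).measurable
  exact (Measurable.ite (measurableSet_lt measurable_fst measurable_snd) (by fun_prop)
    measurable_const).stronglyMeasurable

lemma S_nonneg (hpnn : ∀ x, 0 ≤ p x) {x : ℝ} (hx : 0 ≤ x) : 0 ≤ S p x :=
  setIntegral_nonneg measurableSet_Ioi fun u hu => div_nonneg (hpnn u) (hx.trans (le_of_lt hu))

lemma S_le_S_zero (hpnn : ∀ x, 0 ≤ p x) (hS : IntegrableOn (fun u => p u / u) (Ioi 0))
    {x : ℝ} (hx : 0 ≤ x) : S p x ≤ S p 0 :=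
  setIntegral_mono_set hS
    (ae_restrict_of_forall_mem measurableSet_Ioi fun u (hu : 0 < u) => div_nonneg (hpnn u) hu.le)
    (Ioi_subset_Ioi hx).eventuallyLE

lemma ofReal_S (hpnn : ∀ x, 0 ≤ p x) (hS : IntegrableOn (fun u => p u / u) (Ioi 0))
    {x : ℝ} (hx : 0 ≤ x) :
    ENNReal.ofReal (S p x) = ∫⁻ u in Ioi x, ENNReal.ofReal (p u / u) :=
  ofReal_integral_eq_lintegral_ofReal (hS.mono_set (Ioi_subset_Ioi hx))
    (ae_restrict_of_forall_mem measurableSet_Ioi fun u hu =>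
      div_nonneg (hpnn u) (hx.trans (le_of_lt hu)))

lemma norm_S_le (hpnn : ∀ x, 0 ≤ p x) (hS : IntegrableOn (fun u => p u / u) (Ioi 0))
    {x : ℝ} (hx : 0 ≤ x) : ‖S p x‖ ≤ S p 0 := by
  rw [Real.norm_of_nonneg (S_nonneg hpnn hx)]
  exact S_le_S_zero hpnn hS hx

lemma intervalIntegrable_S (hpm : Measurable p) (hpnn : ∀ x, 0 ≤ p x)
    (hS : IntegrableOn (fun u => p u / u) (Ioi 0)) {x : ℝ} (hx : 0 ≤ x) :
    IntervalIntegrable (S p) volume 0 x :=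
  (intervalIntegrable_iff_integrableOn_Ioc_of_le hx).2 <|
    Measure.integrableOn_of_bounded measure_Ioc_lt_top.ne (measurable_S hpm).aestronglyMeasurable
      (ae_restrict_of_forall_mem measurableSet_Ioc fun _ hv => norm_S_le hpnn hS hv.1.le)

lemma lmoment_S (hpm : Measurable p) (hpnn : ∀ x, 0 ≤ p x)
    (hS : IntegrableOn (fun u => p u / u) (Ioi 0)) (k : ℕ) :
    lmoment (S p) k = lmoment p k / (k + 1) := by
  calc lmoment (S p) k
      = ∫⁻ x in Ioi 0, ENNReal.ofReal (x ^ k) * ∫⁻ u in Ioi x, ENNReal.ofReal (p u / u) :=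
        setLIntegral_congr_fun measurableSet_Ioi fun x (hx : 0 < x) => by
          rw [ofReal_S hpnn hS hx.le]
    _ = ∫⁻ u in Ioi 0, ENNReal.ofReal (u ^ (k + 1) / (k + 1)) * ENNReal.ofReal (p u / u) :=
        lintegral_Ioi_pow_mul_lintegral_Ioi (by fun_prop) k
    _ = ∫⁻ u in Ioi 0, ENNReal.ofReal (u ^ k) * ENNReal.ofReal (p u) * (k + 1 : ℝ≥0∞)⁻¹ := by
        refine setLIntegral_congr_fun measurableSet_Ioi fun u (hu : 0 < u) => ?_
        have hk : (k + 1 : ℝ≥0∞) = ENNReal.ofReal (k + 1) := by norm_cast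
        rw [← div_eq_mul_inv, ← ENNReal.ofReal_mul (by positivity),
          ← ENNReal.ofReal_mul (by positivity), hk, ← ENNReal.ofReal_div_of_pos (by positivity)]
        congr 1
        field_simp
        ring
    _ = lmoment p k / (k + 1) := by
        rw [lintegral_mul_const' _ _ (by simp), div_eq_mul_inv, lmoment]

end S

section equilibrium
variable {μ : ℝ} {p : ℝ → ℝ}

lemma ofReal_eq_of_equilibrium (hμ0 : 0 ≤ μ) (hμ1 : μ ≤ 1) (hpm : Measurable p)
    (hpnn : ∀ x, 0 ≤ p x) (hpint : IntegrableOn p (Ioi 0))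
    (hS : IntegrableOn (fun u => p u / u) (Ioi 0)) {x : ℝ} (hx : 0 < x)
    (hpx : p x = μ * TD p x + (1 - μ) * T p x) :
    ENNReal.ofReal (p x) =
      ENNReal.ofReal (μ / 2) *
          (∫⁻ v in Ioc 0 x, ENNReal.ofReal (p (x - v)) * ENNReal.ofReal (S p v)) +
        ENNReal.ofReal (μ / 2) * ENNReal.ofReal (S p x) +
        ENNReal.ofReal (1 - μ) *
          ∫⁻ v in Ioc 0 x, ENNReal.ofReal (S p (x - v)) * ENNReal.ofReal (S p v) := by
  have hSnn : ∀ v ∈ Icc 0 x, 0 ≤ S p v := fun v hv => S_nonneg hpnn hv.1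
  have hSnn' : ∀ v ∈ Icc 0 x, 0 ≤ S p (x - v) := fun v hv => S_nonneg hpnn (sub_nonneg.2 hv.2)
  have hSbd : ∀ v ∈ Ioc 0 x, ‖S p v‖ ≤ S p 0 := fun v hv => norm_S_le hpnn hS hv.1.le
  have hC := ofReal_intervalIntegral_conv hx.le
    ((intervalIntegrable_iff_integrableOn_Ioc_of_le hx.le).2 (hpint.mono_set Ioc_subset_Ioi_self))
    (measurable_S hpm) hSbd (fun v _ => hpnn (x - v)) (fun v hv => hSnn v (Ioc_subset_Icc_self hv))
  have hT := ofReal_intervalIntegral_conv hx.le (intervalIntegrable_S hpm hpnn hS hx.le)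
    (measurable_S hpm) hSbd (fun v hv => hSnn' v (Ioc_subset_Icc_self hv))
    (fun v hv => hSnn v (Ioc_subset_Icc_self hv))
  have hCnn : 0 ≤ ∫ v in 0..x, p (x - v) * S p v :=
    intervalIntegral.integral_nonneg hx.le fun v hv => mul_nonneg (hpnn _) (hSnn v hv)
  have hTnn : 0 ≤ T p x :=
    intervalIntegral.integral_nonneg hx.le fun v hv => mul_nonneg (hSnn' v hv) (hSnn v hv)
  have hsplit : p x = μ / 2 * (∫ v in 0..x, p (x - v) * S p v) + μ / 2 * S p x
      + (1 - μ) * T p x := by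
    rw [hpx, TD]
    ring
  have hμ2 : 0 ≤ μ / 2 := by linarith
  have h1μ : 0 ≤ 1 - μ := by linarith
  have hSx := hSnn x ⟨hx.le, le_rfl⟩
  rw [hsplit, ENNReal.ofReal_add (add_nonneg (mul_nonneg hμ2 hCnn) (mul_nonneg hμ2 hSx))
      (mul_nonneg h1μ hTnn), ENNReal.ofReal_add (mul_nonneg hμ2 hCnn) (mul_nonneg hμ2 hSx),
    ENNReal.ofReal_mul hμ2, ENNReal.ofReal_mul hμ2, ENNReal.ofReal_mul h1μ, hC, T, hT]

theorem lmoment_eq_of_equilibrium (hμ0 : 0 ≤ μ) (hμ1 : μ ≤ 1) (hpm : Measurable p)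
    (hpnn : ∀ x, 0 ≤ p x) (hpint : IntegrableOn p (Ioi 0))
    (hS : IntegrableOn (fun u => p u / u) (Ioi 0))
    (heq : ∀ x : ℝ, 0 < x → p x = μ * TD p x + (1 - μ) * T p x) (k : ℕ) :
    lmoment p k =
      ENNReal.ofReal (μ / 2) * ∑ j ∈ Finset.range (k + 1),
          (k.choose j : ℝ≥0∞) * lmoment p j * lmoment (S p) (k - j) +
        ENNReal.ofReal (μ / 2) * lmoment (S p) k +
        ENNReal.ofReal (1 - μ) * ∑ j ∈ Finset.range (k + 1),
          (k.choose j : ℝ≥0∞) * lmoment (S p) j * lmoment (S p) (k - j) := by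
  have hPm : Measurable fun x => ENNReal.ofReal (p x) := hpm.ennreal_ofReal
  have hSm : Measurable fun x => ENNReal.ofReal (S p x) := (measurable_S hpm).ennreal_ofReal
  have hCm := measurable_lintegral_Ioc_conv hPm hSm
  have hTm := measurable_lintegral_Ioc_conv hSm hSm
  calc lmoment p k
      = ∫⁻ x in Ioi 0, ENNReal.ofReal (μ / 2) * (ENNReal.ofReal (x ^ k) *
            (∫⁻ v in Ioc 0 x, ENNReal.ofReal (p (x - v)) * ENNReal.ofReal (S p v))) +
          ENNReal.ofReal (μ / 2) * (ENNReal.ofReal (x ^ k) * ENNReal.ofReal (S p x)) +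
          ENNReal.ofReal (1 - μ) * (ENNReal.ofReal (x ^ k) *
            ∫⁻ v in Ioc 0 x, ENNReal.ofReal (S p (x - v)) * ENNReal.ofReal (S p v)) :=
        setLIntegral_congr_fun measurableSet_Ioi fun x (hx : 0 < x) => by
          rw [ofReal_eq_of_equilibrium hμ0 hμ1 hpm hpnn hpint hS hx (heq x hx)]
          ring
    _ = _ := by
        rw [lintegral_add_left (by fun_prop), lintegral_add_left (by fun_prop),
          lintegral_const_mul _ (by fun_prop), lintegral_const_mul _ (by fun_prop),
          lintegral_const_mul _ (by fun_prop), lintegral_Ioi_pow_mul_conv hPm hSm,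
          lintegral_Ioi_pow_mul_conv hSm hSm]
        rfl

end equilibrium

/-- The `k`-th moment of `μ TD[p] + (1 - μ) T[p]` in terms of the moments `m` of `p`: the
convolutions contribute binomial sums, and `S[p]` has moments `m j / (j + 1)`. -/
noncomputable def mixedMomentRHS (μ : ℝ) (m : ℕ → ℝ) (k : ℕ) : ℝ :=
  μ / 2 * ∑ j ∈ Finset.range (k + 1), (k.choose j : ℝ) * m j * (m (k - j) / ((k - j : ℕ) + 1)) +
    μ / 2 * (m k / (k + 1)) +
    (1 - μ) * ∑ j ∈ Finset.range (k + 1),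
      (k.choose j : ℝ) * (m j / (j + 1)) * (m (k - j) / ((k - j : ℕ) + 1))

theorem moment_eq_mixedMomentRHS {μ : ℝ} {p : ℝ → ℝ} (hμ0 : 0 ≤ μ) (hμ1 : μ ≤ 1)
    (hpm : Measurable p) (hpnn : ∀ x, 0 ≤ p x) (hpint : IntegrableOn p (Ioi 0))
    (hS : IntegrableOn (fun u => p u / u) (Ioi 0))
    (hM4 : IntegrableOn (fun x => x ^ 4 * p x) (Ioi 0))
    (heq : ∀ x : ℝ, 0 < x → p x = μ * TD p x + (1 - μ) * T p x) {k : ℕ} (hk : k ≤ 4) :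
    moment p k = mixedMomentRHS μ (moment p) k := by
  have hfin : ∀ j ≤ 4, lmoment p j ≠ ⊤ := fun j hj => by
    rw [lmoment_eq_ofReal_moment hpnn (integrableOn_pow_mul_of_le hpint hM4 hj)]
    exact ENNReal.ofReal_ne_top
  have hSfin : ∀ j ≤ 4, lmoment (S p) j ≠ ⊤ := fun j hj => by
    rw [lmoment_S hpm hpnn hS]
    exact ENNReal.div_ne_top (hfin j hj) (by simp)
  have hSreal : ∀ j : ℕ, (lmoment (S p) j).toReal = moment p j / (j + 1) := fun j => by
    rw [lmoment_S hpm hpnn hS, ENNReal.toReal_div, toReal_lmoment hpm hpnn, ← Nat.cast_add_one,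
      ENNReal.toReal_natCast, Nat.cast_add_one]
  have hl := lmoment_eq_of_equilibrium hμ0 hμ1 hpm hpnn hpint hS heq k
  obtain ⟨hXY, hZ⟩ := ENNReal.add_ne_top.1 (hl ▸ hfin k hk)
  obtain ⟨hX, hY⟩ := ENNReal.add_ne_top.1 hXY
  have hr := congrArg ENNReal.toReal hl
  rw [ENNReal.toReal_add hXY hZ, ENNReal.toReal_add hX hY] at hr
  simp only [ENNReal.toReal_mul, ENNReal.toReal_ofReal (by linarith : 0 ≤ μ / 2),
    ENNReal.toReal_ofReal (by linarith : 0 ≤ 1 - μ),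
    toReal_sum_choose_mul (fun j hj => hfin j (hj.trans hk)) (fun j hj => hSfin j (hj.trans hk)),
    toReal_sum_choose_mul (fun j hj => hSfin j (hj.trans hk)) (fun j hj => hSfin j (hj.trans hk)),
    toReal_lmoment hpm hpnn, hSreal] at hr
  exact hr

lemma moments_of_mixedMomentRHS {μ w : ℝ} {m : ℕ → ℝ} (hμ : μ ≠ 2) (h0 : m 0 = 1)
    (h1 : m 1 = w) (hrec : ∀ k ≤ 4, m k = mixedMomentRHS μ m k) :
    m 2 = 3 / (2 - μ) * w ^ 2 ∧ m 3 = 3 * (4 + μ) / (2 - μ) ^ 2 * w ^ 3 ∧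
      m 4 = 5 * (μ ^ 2 + 8 * μ + 12) / (2 - μ) ^ 3 * w ^ 4 := by
  have h2μ : 2 - μ ≠ 0 := sub_ne_zero.2 hμ.symm
  have E2 := hrec 2 (by norm_num)
  have E3 := hrec 3 (by norm_num)
  have E4 := hrec 4 le_rfl
  simp only [mixedMomentRHS, Finset.sum_range_succ, Finset.sum_range_zero] at E2 E3 E4
  norm_num [Nat.choose, h0, h1] at E2 E3 E4
  have hm2 : m 2 * (2 - μ) = 3 * w ^ 2 := by linear_combination 6 * E2
  have hm3 : m 3 * (2 - μ) ^ 2 = 3 * (4 + μ) * w ^ 3 := by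
    linear_combination 4 * (2 - μ) * E3 + (4 + μ) * w * hm2
  have hm4 : m 4 * (2 - μ) ^ 3 = 5 * (μ ^ 2 + 8 * μ + 12) * w ^ 4 := by
    linear_combination (30 * (2 - μ) ^ 2 / 9) * E4 + ((30 + 15 * μ) / 9) * w * hm3
      + ((20 + 10 * μ) / 9) * (m 2 * (2 - μ) + 3 * w ^ 2) * hm2
  refine ⟨?_, ?_, ?_⟩ <;> field_simp
  · linear_combination hm2
  · linear_combination hm3
  · linear_combination hm4

/-- The first four moments of the equilibrium distribution of the mixed model. -/
theorem mixed_model_moments (μ : ℝ) (hμ0 : 0 ≤ μ) (hμ1 : μ ≤ 1)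
    (p : ℝ → ℝ) (w : ℝ)
    (hpm : Measurable p) (hpnn : ∀ x, 0 ≤ p x)
    (hpint : IntegrableOn p (Set.Ioi 0)) (hp1 : ∫ x in Set.Ioi (0:ℝ), p x = 1)
    (hS : IntegrableOn (fun u => p u / u) (Set.Ioi 0))
    (hM4 : IntegrableOn (fun x => x ^ 4 * p x) (Set.Ioi 0))
    (hw : ∫ x in Set.Ioi (0:ℝ), x * p x = w)
    (heq : ∀ x : ℝ, 0 < x → p x = μ * TD p x + (1 - μ) * T p x) :
    (∫ x in Set.Ioi (0:ℝ), x * p x = w) ∧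
    (∫ x in Set.Ioi (0:ℝ), x ^ 2 * p x = 3 / (2 - μ) * w ^ 2) ∧
    (∫ x in Set.Ioi (0:ℝ), x ^ 3 * p x = 3 * (4 + μ) / (2 - μ) ^ 2 * w ^ 3) ∧
    (∫ x in Set.Ioi (0:ℝ), x ^ 4 * p x
      = 5 * (μ ^ 2 + 8 * μ + 12) / (2 - μ) ^ 3 * w ^ 4) := by
  have h0 : moment p 0 = 1 := by simpa [moment] using hp1
  have h1 : moment p 1 = w := by simpa [moment] using hw
  exact ⟨hw, moments_of_mixedMomentRHS (by linarith) h0 h1 fun k hk =>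
    moment_eq_mixedMomentRHS hμ0 hμ1 hpm hpnn hpint hS hM4 heq hk⟩
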